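/- arXiv:1007.1882 — 3 statements merged into one kernel-verified Lean document; each statement's English description precedes it below -/
import Mathlib

section
/- Let K be a closed subset of a normed space U, g : U → ℝ measurable with 0 ≤ g(u) ≤ c(1 + |u|^q) for all u, and g(u) ≥ C|u|^q whenever u ∈ K with |u| ≥ R, for constants c, C, R > 0 and 1 < q ≤ 2. Let R̃ : U → H satisfy |R̃(u)| ≤ c(1 + |u|). Define ψ(z) = inf_{u ∈ K} { g(u) + ⟨z, R̃(u)⟩ }. Then there exists a constant C' > 0 such that ψ(z) ≥ −C'(1 + |z|^p) for all z ∈ H, where p is the conjugate exponent of q. -/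
open scoped RealInnerProductSpace

/-! By Cauchy–Schwarz and the linear growth of `R̃`, `g u + ⟪z, R̃ u⟫ ≥ g u - c‖z‖(1 + ‖u‖)`.
For `‖u‖ ≤ R` the term `c‖z‖‖u‖` is at most `c R ‖z‖` and `g ≥ 0`; for `‖u‖ ≥ R` it is absorbed
by the coercivity `g u ≥ C‖u‖^q` through Young's inequality with the conjugate exponents `p, q`,
at the cost of a multiple of `‖z‖^p`. Finally `‖z‖ ≤ 1 + ‖z‖^p`. -/

lemma Real.le_one_add_rpow {p t : ℝ} (hp : 1 ≤ p) (ht : 0 ≤ t) : t ≤ 1 + t ^ p := by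
  rcases le_total t 1 with h | h
  · linarith [Real.rpow_nonneg ht p]
  · linarith [Real.self_le_rpow_of_one_le h hp]

lemma Real.exists_mul_le_mul_rpow_add_mul_rpow {C p q : ℝ} (hC : 0 < C)
    (hpq : p.HolderConjugate q) :
    ∃ K ≥ 0, ∀ a t : ℝ, 0 ≤ a → 0 ≤ t → a * t ≤ C * t ^ q + K * a ^ p := by
  have hqC : 0 < q * C := mul_pos hpq.symm.pos hC
  -- rescale Young's inequality by `ε` with `ε ^ q / q = C`
  set ε : ℝ := (q * C) ^ q⁻¹
  have hε : 0 < ε := Real.rpow_pos_of_pos hqC _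
  have hεq : ε ^ q = q * C := by
    rw [← Real.rpow_mul hqC.le, inv_mul_cancel₀ hpq.symm.ne_zero, Real.rpow_one]
  refine ⟨(1 / ε) ^ p / p, by have := hpq.pos; positivity, fun a t ha ht => ?_⟩
  calc a * t = (a / ε) * (ε * t) := by field_simp
    _ ≤ (a / ε) ^ p / p + (ε * t) ^ q / q :=
      Real.young_inequality_of_nonneg (by positivity) (by positivity) hpq
    _ = C * t ^ q + (1 / ε) ^ p / p * a ^ p := by
      rw [div_eq_mul_one_div a ε, Real.mul_rpow ha (by positivity),
        Real.mul_rpow hε.le ht, hεq]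
      field_simp [hpq.symm.ne_zero]
      ring

lemma Real.mul_le_add_of_coercive {C R K p q a t G : ℝ} (hR : 0 ≤ R) (hK : 0 ≤ K)
    (hyoung : ∀ a t : ℝ, 0 ≤ a → 0 ≤ t → a * t ≤ C * t ^ q + K * a ^ p)
    (ha : 0 ≤ a) (ht : 0 ≤ t) (hG : 0 ≤ G) (hcoer : R ≤ t → C * t ^ q ≤ G) :
    a * t ≤ G + a * R + K * a ^ p := by
  have hKa : 0 ≤ K * a ^ p := mul_nonneg hK (Real.rpow_nonneg ha p)
  rcases le_total t R with hsmall | hlarge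
  · nlinarith [mul_le_mul_of_nonneg_left hsmall ha]
  · nlinarith [hyoung a t ha ht, hcoer hlarge, mul_nonneg ha hR]

theorem stmt1_general {U H : Type*} [NormedAddCommGroup U]
    [NormedAddCommGroup H] [InnerProductSpace ℝ H]
    (K : Set U) (hKne : K.Nonempty)
    (g : U → ℝ)
    (Rt : U → H) (c C R q p : ℝ) (hc : 0 < c) (hC : 0 < C) (hR : 0 < R)
    (hq1 : 1 < q) (hp : p = q / (q - 1))
    (hg0 : ∀ u, 0 ≤ g u)
    (hcoer : ∀ u ∈ K, R ≤ ‖u‖ → C * ‖u‖ ^ q ≤ g u)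
    (hRt : ∀ u, ‖Rt u‖ ≤ c * (1 + ‖u‖)) :
    ∃ C' > 0, ∀ z : H,
      -C' * (1 + ‖z‖ ^ p) ≤ sInf ((fun u => g u + ⟪z, Rt u⟫) '' K) := by
  have hpq : p.HolderConjugate q :=
    ((Real.holderConjugate_iff_eq_conjExponent hq1).2 hp).symm
  obtain ⟨A, hA, hyoung⟩ := Real.exists_mul_le_mul_rpow_add_mul_rpow hC hpq
  refine ⟨c * (1 + R) + A * c ^ p, by positivity, fun z => le_csInf (hKne.image _) ?_⟩
  rintro _ ⟨u, hu, rfl⟩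
  have hinner : -(c * ‖z‖ + c * ‖z‖ * ‖u‖) ≤ ⟪z, Rt u⟫ := by
    have := (abs_real_inner_le_norm z (Rt u)).trans
      (mul_le_mul_of_nonneg_left (hRt u) (norm_nonneg z))
    linarith [neg_abs_le ⟪z, Rt u⟫]
  have hlin := Real.mul_le_add_of_coercive (a := c * ‖z‖) hR.le hA hyoung (by positivity)
    (norm_nonneg u) (hg0 u) (hcoer u hu)
  rw [Real.mul_rpow hc.le (norm_nonneg z)] at hlin
  have hz := Real.le_one_add_rpow hpq.lt.le (norm_nonneg z)
  have hzp : 0 ≤ ‖z‖ ^ p := Real.rpow_nonneg (norm_nonneg z) p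
  nlinarith [mul_le_mul_of_nonneg_left hz (by positivity : 0 ≤ c * (1 + R)),
    mul_nonneg hA (Real.rpow_nonneg hc.le p)]

/-- Lower bound for the Hamiltonian `ψ(z) = inf_{u ∈ K} { g(u) + ⟪z, R̃(u)⟫ }`:
there is `C' > 0` with `ψ(z) ≥ -C'(1 + ‖z‖^p)`. -/
theorem stmt1 {U H : Type*} [NormedAddCommGroup U] [NormedSpace ℝ U] [MeasurableSpace U]
    [BorelSpace U] [NormedAddCommGroup H] [InnerProductSpace ℝ H]
    (K : Set U) (hKclosed : IsClosed K) (hKne : K.Nonempty)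
    (g : U → ℝ) (hgmeas : Measurable g)
    (Rt : U → H) (c C R q p : ℝ) (hc : 0 < c) (hC : 0 < C) (hR : 0 < R)
    (hq1 : 1 < q) (hq2 : q ≤ 2) (hp : p = q / (q - 1))
    (hg0 : ∀ u, 0 ≤ g u) (hgup : ∀ u, g u ≤ c * (1 + ‖u‖ ^ q))
    (hcoer : ∀ u ∈ K, R ≤ ‖u‖ → C * ‖u‖ ^ q ≤ g u)
    (hRt : ∀ u, ‖Rt u‖ ≤ c * (1 + ‖u‖)) :
    ∃ C' > 0, ∀ z : H,
      -C' * (1 + ‖z‖ ^ p) ≤ sInf ((fun u => g u + ⟪z, Rt u⟫) '' K) :=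
  stmt1_general K hKne g Rt c C R q p hc hC hR hq1 hp hg0 hcoer hRt
end

section
/- Under the same hypotheses as in the lower bound lemma (g satisfies 0 ≤ g(u) ≤ c(1+|u|^q) and coercivity g(u) ≥ C|u|^q for |u| ≥ R on K, and |R̃(u)| ≤ c(1+|u|)), there exists a constant C̄ > 0 such that for every z ∈ H, inf_{u ∈ K} { g(u) + ⟨z, R̃(u)⟩ } = inf_{u ∈ K, |u| ≤ C̄(1+|z|^{p−1})} { g(u) + ⟨z, R̃(u)⟩ }; i.e. the infimum defining the Hamiltonian is effectively attained within a ball of radius C̄(1+|z|^{p−1}). -/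
open scoped RealInnerProductSpace
open Filter Set

/-!
Outside the ball of radius `C̄ (1 + ‖z‖^{p-1})` we have `‖u‖^{q-1} ≥ C̄^{q-1} max 1 ‖z‖`
(as `(p - 1)(q - 1) = 1`), so the coercive term `C ‖u‖^q` dominates `g u⁰ + ⟪z, R̃ u⁰⟫` and
the linear growth `‖z‖ c (1 + ‖u‖)` of `⟪z, R̃ u⟫`: no such `u` beats the competitor `u⁰`,
which lies in the ball. On the ball the integrand is bounded below, so the two infima agree.
-/

theorem csInf_image_eq_of_subset_of_le {α β : Type*} [ConditionallyCompleteLattice β]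
    {f : α → β} {s t : Set α} (hts : t ⊆ s) (hbdd : BddBelow (f '' t)) {a : α} (ha : a ∈ t)
    (hle : ∀ x ∈ s, x ∉ t → f a ≤ f x) :
    sInf (f '' s) = sInf (f '' t) := by
  have hne : (f '' t).Nonempty := ⟨f a, mem_image_of_mem f ha⟩
  have hlb : ∀ x ∈ s, sInf (f '' t) ≤ f x := fun x hx => by
    by_cases hxt : x ∈ t
    · exact csInf_le hbdd (mem_image_of_mem f hxt)
    · exact (csInf_le hbdd (mem_image_of_mem f ha)).trans (hle x hx hxt)
  exact le_antisymm
    (csInf_le_csInf ⟨_, forall_mem_image.2 hlb⟩ hne (image_mono hts))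
    (le_csInf (hne.mono (image_mono hts)) (forall_mem_image.2 hlb))

theorem exists_ge_and_le_mul_rpow (R A : ℝ) {C r : ℝ} (hC : 0 < C) (hr : 0 < r) :
    ∃ K, R ≤ K ∧ A ≤ C * K ^ r :=
  ((eventually_ge_atTop R).and ((tendsto_rpow_atTop hr).eventually_ge_atTop (A / C))).exists.imp
    fun _ hK => ⟨hK.1, (div_le_iff₀' hC).1 hK.2⟩

theorem mul_le_rpow_of_mul_rpow_le {K s t r r' : ℝ} (hK : 0 ≤ K) (hs : 0 ≤ s) (hr' : 0 ≤ r')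
    (hrr' : r * r' = 1) (h : K * s ^ r ≤ t) : K ^ r' * s ≤ t ^ r' := by
  have := Real.rpow_le_rpow (by positivity) h hr'
  rwa [Real.mul_rpow hK (by positivity), ← Real.rpow_mul hs, hrr', Real.rpow_one] at this

theorem add_mul_add_le_mul_rpow {a b c C K s t p q : ℝ} (ha : 0 ≤ a) (hb : 0 ≤ b) (hc : 0 ≤ c)
    (hC : 0 ≤ C) (hq : 1 < q) (hpq : (p - 1) * (q - 1) = 1) (hs : 0 ≤ s) (hK : 1 ≤ K)
    (hA : a + b + 2 * c ≤ C * K ^ (q - 1)) (ht : K * (1 + s ^ (p - 1)) ≤ t) :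
    a + s * b + s * c * (1 + t) ≤ C * t ^ q := by
  have hq1 : 0 ≤ q - 1 := by linarith
  have hKt : K ≤ t := le_trans (le_mul_of_one_le_right (by linarith)
    (le_add_of_nonneg_right (Real.rpow_nonneg hs _))) ht
  have ht1 : 1 ≤ t := hK.trans hKt
  have hM : K ^ (q - 1) * max 1 s ≤ t ^ (q - 1) := by
    rw [mul_max_of_nonneg _ _ (by positivity), mul_one]
    exact max_le (Real.rpow_le_rpow (by linarith) hKt hq1) (mul_le_rpow_of_mul_rpow_le
      (by linarith) hs hq1 hpq (le_trans (by nlinarith [Real.rpow_nonneg hs (p - 1)]) ht))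
  have hMt1 : 1 ≤ max 1 s * t := one_le_mul_of_one_le_of_one_le (le_max_left _ _) ht1
  have hMts : s ≤ max 1 s * t :=
    (le_max_right 1 s).trans (le_mul_of_one_le_right (by positivity) ht1)
  have hMst : s * t ≤ max 1 s * t := mul_le_mul_of_nonneg_right (le_max_right _ _) (by linarith)
  calc a + s * b + s * c * (1 + t) ≤ (a + b + 2 * c) * (max 1 s * t) := by nlinarith
    _ ≤ C * K ^ (q - 1) * (max 1 s * t) := mul_le_mul_of_nonneg_right hA (by linarith)
    _ = C * (K ^ (q - 1) * max 1 s) * t := by ring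
    _ ≤ C * t ^ (q - 1) * t := by gcongr
    _ = C * t ^ q := by
      rw [mul_assoc, ← Real.rpow_add_one (by linarith), sub_add_cancel]

section Hamiltonian

variable {U H : Type*} [Norm U] [SeminormedAddCommGroup H] [InnerProductSpace ℝ H]
  {g : U → ℝ} {Rt : U → H} {c : ℝ}

theorem abs_real_inner_le_of_norm_le {z w : H} {b : ℝ} (h : ‖w‖ ≤ b) : |⟪z, w⟫| ≤ ‖z‖ * b :=
  (abs_real_inner_le_norm z w).trans (mul_le_mul_of_nonneg_left h (norm_nonneg z))

theorem bddBelow_image_add_inner (hc : 0 ≤ c) (hg0 : ∀ u, 0 ≤ g u)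
    (hRt : ∀ u, ‖Rt u‖ ≤ c * (1 + ‖u‖)) (z : H) (K : Set U) (T : ℝ) :
    BddBelow ((fun u => g u + ⟪z, Rt u⟫) '' {u ∈ K | ‖u‖ ≤ T}) := by
  refine ⟨-(‖z‖ * (c * (1 + T))), forall_mem_image.2 fun u hu => ?_⟩
  have hRtu : ‖Rt u‖ ≤ c * (1 + T) := (hRt u).trans (by gcongr; exact hu.2)
  linarith [hg0 u, neg_abs_le ⟪z, Rt u⟫, abs_real_inner_le_of_norm_le (z := z) hRtu]

theorem add_inner_le_add_inner_of_coercive {C K q p : ℝ} (hc : 0 ≤ c) (hC : 0 ≤ C)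
    (hq : 1 < q) (hpq : (p - 1) * (q - 1) = 1) (hRt : ∀ u, ‖Rt u‖ ≤ c * (1 + ‖u‖))
    {u₀ u : U} (hg0 : 0 ≤ g u₀) (hK : 1 ≤ K)
    (hA : g u₀ + c * (1 + ‖u₀‖) + 2 * c ≤ C * K ^ (q - 1))
    (z : H) (hu : K * (1 + ‖z‖ ^ (p - 1)) ≤ ‖u‖) (hgu : C * ‖u‖ ^ q ≤ g u) :
    g u₀ + ⟪z, Rt u₀⟫ ≤ g u + ⟪z, Rt u⟫ := by
  have h₀ := (le_abs_self _).trans (abs_real_inner_le_of_norm_le (z := z) (hRt u₀))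
  have h₁ := neg_abs_le ⟪z, Rt u⟫ |>.trans' (neg_le_neg (abs_real_inner_le_of_norm_le (hRt u)))
  have := add_mul_add_le_mul_rpow hg0 ((norm_nonneg _).trans (hRt u₀)) hc hC hq hpq
    (norm_nonneg z) hK hA hu
  linarith

end Hamiltonian

theorem stmt2_general {U H : Type*} [NormedAddCommGroup U]
    [NormedAddCommGroup H] [InnerProductSpace ℝ H]
    (K : Set U) (u0 : U) (hu0 : u0 ∈ K)
    (g : U → ℝ)
    (Rt : U → H) (c C R q p : ℝ) (hc : 0 < c) (hC : 0 < C)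
    (hq1 : 1 < q) (hp : p = q / (q - 1))
    (hg0 : ∀ u, 0 ≤ g u)
    (hcoer : ∀ u ∈ K, R ≤ ‖u‖ → C * ‖u‖ ^ q ≤ g u)
    (hRt : ∀ u, ‖Rt u‖ ≤ c * (1 + ‖u‖)) :
    ∃ Cbar > 0, ∀ z : H,
      sInf ((fun u => g u + ⟪z, Rt u⟫) '' K) =
        sInf ((fun u => g u + ⟪z, Rt u⟫) ''
          {u ∈ K | ‖u‖ ≤ Cbar * (1 + ‖z‖ ^ (p - 1))}) := by
  have hpq : (p - 1) * (q - 1) = 1 := by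
    rw [hp]
    field_simp [(sub_pos.2 hq1).ne']
    ring
  obtain ⟨Cbar, hCbar, hA⟩ := exists_ge_and_le_mul_rpow (max (max 1 R) ‖u0‖)
    (g u0 + c * (1 + ‖u0‖) + 2 * c) hC (sub_pos.2 hq1)
  obtain ⟨⟨hCbar1, hRCbar⟩, hu0Cbar⟩ := And.imp_left max_le_iff.1 (max_le_iff.1 hCbar)
  refine ⟨Cbar, by linarith, fun z => ?_⟩
  have hT : Cbar ≤ Cbar * (1 + ‖z‖ ^ (p - 1)) := le_mul_of_one_le_right (by linarith)
    (le_add_of_nonneg_right (Real.rpow_nonneg (norm_nonneg z) _))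
  refine csInf_image_eq_of_subset_of_le (sep_subset _ _)
    (bddBelow_image_add_inner hc.le hg0 hRt z K _) ⟨hu0, hu0Cbar.trans hT⟩ fun u huK hout => ?_
  have hu : Cbar * (1 + ‖z‖ ^ (p - 1)) ≤ ‖u‖ := (not_le.1 fun h => hout ⟨huK, h⟩).le
  exact add_inner_le_add_inner_of_coercive hc.le hC.le hq1 hpq hRt (hg0 u0) hCbar1 hA z hu
    (hcoer u huK (hRCbar.trans (hT.trans hu)))

/-- The infimum defining the Hamiltonian is effectively attained within a ball of
radius `C̄(1 + ‖z‖^{p-1})`. -/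
theorem stmt2 {U H : Type*} [NormedAddCommGroup U] [NormedSpace ℝ U] [MeasurableSpace U]
    [BorelSpace U] [NormedAddCommGroup H] [InnerProductSpace ℝ H]
    (K : Set U) (hKclosed : IsClosed K) (u0 : U) (hu0 : u0 ∈ K)
    (g : U → ℝ) (hgmeas : Measurable g)
    (Rt : U → H) (c C R q p : ℝ) (hc : 0 < c) (hC : 0 < C) (hR : 0 < R)
    (hq1 : 1 < q) (hq2 : q ≤ 2) (hp : p = q / (q - 1))
    (hg0 : ∀ u, 0 ≤ g u) (hgup : ∀ u, g u ≤ c * (1 + ‖u‖ ^ q))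
    (hcoer : ∀ u ∈ K, R ≤ ‖u‖ → C * ‖u‖ ^ q ≤ g u)
    (hRt : ∀ u, ‖Rt u‖ ≤ c * (1 + ‖u‖)) :
    ∃ Cbar > 0, ∀ z : H,
      sInf ((fun u => g u + ⟪z, Rt u⟫) '' K) =
        sInf ((fun u => g u + ⟪z, Rt u⟫) ''
          {u ∈ K | ‖u‖ ≤ Cbar * (1 + ‖z‖ ^ (p - 1))}) :=
  stmt2_general K u0 hu0 g Rt c C R q p hc hC hq1 hp hg0 hcoer hRt
end

section
/- Let ψ : H → ℝ be defined as ψ(z) = inf_{u ∈ K} { g(u) + ⟨z, R̃(u)⟩ } under the hypotheses guaranteeing the infimum localizes in a ball of radius C(1+|z|^{p−1}). Then ψ is locally Lipschitz with the quantitative bound |ψ(z₁) − ψ(z₂)| ≤ C'(1 + |z₁|^{p−1} + |z₂|^{p−1}) |z₁ − z₂| for all z₁, z₂ ∈ H. -/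
open scoped RealInnerProductSpace

open Set

/-!
Coercivity `g u ≥ C‖u‖^q` dominates the linear growth `|⟪z, R̃ u⟫| ≤ c(1 + ‖u‖)‖z‖`: every `u ∈ K`
whose cost is within `1` of the cost at a fixed `u₀ ∈ K` has `C‖u‖^q ≲ (1 + ‖z‖)‖u‖`, hence
`‖u‖ ≲ (1 + ‖z‖)^{1/(q-1)} = (1 + ‖z‖)^{p-1}`. So `ψ(z)` is finite and is approached by such
near-minimisers, and at each of them the cost moves by at most `c(1 + ‖u‖)‖z₁ - z₂‖` when `z₂` is
replaced by `z₁`; this bounds `ψ(z₁) - ψ(z₂)`, and symmetrically `ψ(z₂) - ψ(z₁)`.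
-/

theorem one_add_rpow_le_two_rpow_mul {x s : ℝ} (hx : 0 ≤ x) (hs : 0 ≤ s) :
    (1 + x) ^ s ≤ 2 ^ s * (1 + x ^ s) := by
  have hxs : 0 ≤ x ^ s := Real.rpow_nonneg hx s
  rcases le_total x 1 with hx1 | hx1
  · calc (1 + x) ^ s ≤ 2 ^ s := by gcongr; linarith
      _ ≤ 2 ^ s * (1 + x ^ s) := le_mul_of_one_le_right (by positivity) (by linarith)
  · calc (1 + x) ^ s ≤ (2 * x) ^ s := by gcongr; linarith
      _ = 2 ^ s * x ^ s := Real.mul_rpow zero_le_two hx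
      _ ≤ 2 ^ s * (1 + x ^ s) := by gcongr; linarith

theorem le_rpow_inv_of_mul_rpow_le_mul {t q C B : ℝ} (hq : 1 < q) (hC : 0 < C) (ht : 0 < t)
    (h : C * t ^ q ≤ B * t) : t ≤ (B / C) ^ (q - 1)⁻¹ := by
  have hpow : t ^ (q - 1) ≤ B / C := by
    rw [Real.rpow_sub_one ht.ne', le_div_iff₀ hC, div_mul_eq_mul_div, div_le_iff₀ ht]
    linarith
  have hB : 0 ≤ B / C := (Real.rpow_nonneg ht.le _).trans hpow
  exact (Real.le_rpow_inv_iff_of_pos ht.le hB (by linarith)).2 hpow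

theorem sInf_image_le_sInf_image_add {α : Type*} {K : Set α} {φ ψ : α → ℝ} {L : ℝ}
    (hK : K.Nonempty) (hφ : BddBelow (φ '' K))
    (h : ∀ u ∈ K, ψ u ≤ sInf (ψ '' K) + 1 → φ u ≤ ψ u + L) :
    sInf (φ '' K) ≤ sInf (ψ '' K) + L := by
  refine le_of_forall_pos_le_add fun ε hε => ?_
  obtain ⟨_, ⟨u, hu, rfl⟩, hlt⟩ := Real.lt_sInf_add_pos (hK.image ψ) (lt_min hε one_pos)
  have hψu := h u hu (hlt.le.trans (by gcongr; exact min_le_right ε 1))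
  calc sInf (φ '' K) ≤ φ u := csInf_le hφ (mem_image_of_mem φ hu)
    _ ≤ ψ u + L := hψu
    _ ≤ sInf (ψ '' K) + L + ε := by linarith [min_le_left ε 1]

section Hamiltonian

variable {U H : Type*} [NormedAddCommGroup U] [NormedAddCommGroup H] [InnerProductSpace ℝ H]
  {K : Set U} {g : U → ℝ} {Rt : U → H} {c C q : ℝ}

noncomputable def hamiltonian (K : Set U) (g : U → ℝ) (Rt : U → H) (z : H) : ℝ :=
  sInf ((fun u => g u + ⟪z, Rt u⟫) '' K)

theorem abs_inner_le_of_norm_le_mul_one_add (hRt : ∀ u, ‖Rt u‖ ≤ c * (1 + ‖u‖)) (z : H) (u : U) :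
    |⟪z, Rt u⟫| ≤ c * (1 + ‖u‖) * ‖z‖ :=
  (abs_real_inner_le_norm z (Rt u)).trans <| by
    rw [mul_comm]; exact mul_le_mul_of_nonneg_right (hRt u) (norm_nonneg z)

theorem norm_le_rpow_of_coercive (hq : 1 < q) (hC : 0 < C) (hc : 0 ≤ c)
    (hRt : ∀ u, ‖Rt u‖ ≤ c * (1 + ‖u‖)) {u : U} {z : H} {a : ℝ} (ha : 0 ≤ a) (hu : 1 ≤ ‖u‖)
    (hcoer : C * ‖u‖ ^ q ≤ g u) (hle : g u + ⟪z, Rt u⟫ ≤ a) :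
    ‖u‖ ≤ ((a + 2 * c * ‖z‖) / C) ^ (q - 1)⁻¹ := by
  refine le_rpow_inv_of_mul_rpow_le_mul hq hC (by linarith) ?_
  have := neg_abs_le ⟪z, Rt u⟫
  have := abs_inner_le_of_norm_le_mul_one_add hRt z u
  have hcz : 0 ≤ c * ‖z‖ := by positivity
  calc C * ‖u‖ ^ q ≤ a + c * (1 + ‖u‖) * ‖z‖ := by linarith
    _ ≤ (a + 2 * c * ‖z‖) * ‖u‖ := by nlinarith

theorem exists_forall_sublevel_one_add_norm_le (hq : 1 < q) (hC : 0 < C) (hc : 0 ≤ c)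
    (hRt : ∀ u, ‖Rt u‖ ≤ c * (1 + ‖u‖)) {R : ℝ} (hcoer : ∀ u ∈ K, R ≤ ‖u‖ → C * ‖u‖ ^ q ≤ g u)
    {u₀ : U} (hg₀ : 0 ≤ g u₀) :
    ∃ F > 0, ∀ (z : H), ∀ u ∈ K, g u + ⟪z, Rt u⟫ ≤ g u₀ + ⟪z, Rt u₀⟫ + 1 →
      1 + ‖u‖ ≤ F * (1 + ‖z‖ ^ (q - 1)⁻¹) := by
  set A := g u₀ + c * (1 + ‖u₀‖) + 1
  set D := ((A + 2 * c) / C) ^ (q - 1)⁻¹ * 2 ^ (q - 1)⁻¹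
  have hs : 0 ≤ (q - 1)⁻¹ := inv_nonneg.2 (by linarith)
  have hD : 0 ≤ D := by positivity
  refine ⟨1 + max R 1 + D, by positivity, fun z u hu hle => ?_⟩
  have hzs : 0 ≤ ‖z‖ ^ (q - 1)⁻¹ := by positivity
  suffices ‖u‖ ≤ max R 1 ∨ ‖u‖ ≤ D * (1 + ‖z‖ ^ (q - 1)⁻¹) by
    rcases this with h | h <;> nlinarith [le_max_right R 1]
  refine or_iff_not_imp_left.2 fun hbig => ?_
  replace hbig := (not_le.1 hbig).le
  have hlevel : g u₀ + ⟪z, Rt u₀⟫ + 1 ≤ A * (1 + ‖z‖) := by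
    have := le_abs_self ⟪z, Rt u₀⟫
    have := abs_inner_le_of_norm_le_mul_one_add hRt z u₀
    nlinarith [norm_nonneg z, norm_nonneg u₀]
  have hA : 0 ≤ A := by positivity
  calc ‖u‖ ≤ ((A * (1 + ‖z‖) + 2 * c * ‖z‖) / C) ^ (q - 1)⁻¹ :=
        norm_le_rpow_of_coercive hq hC hc hRt (by positivity) ((le_max_right R 1).trans hbig)
          (hcoer u hu ((le_max_left R 1).trans hbig)) (hle.trans hlevel)
    _ ≤ ((A + 2 * c) / C * (1 + ‖z‖)) ^ (q - 1)⁻¹ := by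
        gcongr
        rw [div_mul_eq_mul_div]
        gcongr
        nlinarith [norm_nonneg z]
    _ = ((A + 2 * c) / C) ^ (q - 1)⁻¹ * (1 + ‖z‖) ^ (q - 1)⁻¹ :=
        Real.mul_rpow (by positivity) (by positivity)
    _ ≤ ((A + 2 * c) / C) ^ (q - 1)⁻¹ * (2 ^ (q - 1)⁻¹ * (1 + ‖z‖ ^ (q - 1)⁻¹)) := by
        gcongr
        exact one_add_rpow_le_two_rpow_mul (norm_nonneg z) hs
    _ = D * (1 + ‖z‖ ^ (q - 1)⁻¹) := by ring

theorem bddBelow_image_of_sublevel_norm_le (hc : 0 ≤ c) (hRt : ∀ u, ‖Rt u‖ ≤ c * (1 + ‖u‖))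
    (hg0 : ∀ u, 0 ≤ g u) {u₀ : U} {z : H} {L : ℝ}
    (hloc : ∀ u ∈ K, g u + ⟪z, Rt u⟫ ≤ g u₀ + ⟪z, Rt u₀⟫ + 1 → 1 + ‖u‖ ≤ L) :
    BddBelow ((fun u => g u + ⟪z, Rt u⟫) '' K) := by
  refine ⟨min (g u₀ + ⟪z, Rt u₀⟫ + 1) (-(c * L * ‖z‖)), ?_⟩
  rintro _ ⟨u, hu, rfl⟩
  by_cases hle : g u + ⟪z, Rt u⟫ ≤ g u₀ + ⟪z, Rt u₀⟫ + 1
  · have hL := hloc u hu hle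
    have := neg_abs_le ⟪z, Rt u⟫
    have := abs_inner_le_of_norm_le_mul_one_add hRt z u
    have : c * (1 + ‖u‖) * ‖z‖ ≤ c * L * ‖z‖ := by gcongr
    exact (min_le_right _ _).trans (by linarith [hg0 u])
  · exact (min_le_left _ _).trans (not_le.1 hle).le

theorem hamiltonian_le_add_mul_norm_sub (hc : 0 ≤ c) (hRt : ∀ u, ‖Rt u‖ ≤ c * (1 + ‖u‖)) (hK : K.Nonempty)
    {z₁ z₂ : H} {L : ℝ} (hbdd : BddBelow ((fun u => g u + ⟪z₁, Rt u⟫) '' K))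
    (hloc : ∀ u ∈ K, g u + ⟪z₂, Rt u⟫ ≤ hamiltonian K g Rt z₂ + 1 → 1 + ‖u‖ ≤ L) :
    hamiltonian K g Rt z₁ ≤ hamiltonian K g Rt z₂ + c * L * ‖z₁ - z₂‖ := by
  refine sInf_image_le_sInf_image_add hK hbdd fun u hu hle => ?_
  have := le_abs_self ⟪z₁ - z₂, Rt u⟫
  have := abs_inner_le_of_norm_le_mul_one_add hRt (z₁ - z₂) u
  have : c * (1 + ‖u‖) * ‖z₁ - z₂‖ ≤ c * L * ‖z₁ - z₂‖ := by gcongr; exact hloc u hu hle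
  simp only [inner_sub_left] at *
  linarith

end Hamiltonian

theorem stmt3_general {U H : Type*} [NormedAddCommGroup U] [NormedAddCommGroup H] [InnerProductSpace ℝ H]
    (K : Set U) (hKne : K.Nonempty) (g : U → ℝ)
    (Rt : U → H) (c C R q p : ℝ) (hc : 0 < c) (hC : 0 < C)
    (hq1 : 1 < q) (hp : p = q / (q - 1)) (hg0 : ∀ u, 0 ≤ g u)
    (hcoer : ∀ u ∈ K, R ≤ ‖u‖ → C * ‖u‖ ^ q ≤ g u)
    (hRt : ∀ u, ‖Rt u‖ ≤ c * (1 + ‖u‖)) :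
    ∃ C' > 0, ∀ z₁ z₂ : H,
      |sInf ((fun u => g u + ⟪z₁, Rt u⟫) '' K) -
        sInf ((fun u => g u + ⟪z₂, Rt u⟫) '' K)|
        ≤ C' * (1 + ‖z₁‖ ^ (p - 1) + ‖z₂‖ ^ (p - 1)) * ‖z₁ - z₂‖ := by
  have hp1 : p - 1 = (q - 1)⁻¹ := by
    rw [hp]; field_simp [(by linarith : q - 1 ≠ 0)]; ring
  obtain ⟨u₀, hu₀⟩ := hKne
  obtain ⟨F, hF, hloc⟩ := exists_forall_sublevel_one_add_norm_le hq1 hC hc.le hRt hcoer (hg0 u₀)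
  have hbdd (z : H) : BddBelow ((fun u => g u + ⟪z, Rt u⟫) '' K) :=
    bddBelow_image_of_sublevel_norm_le hc.le hRt hg0 (hloc z)
  have hside (z₁ z₂ : H) : hamiltonian K g Rt z₁ - hamiltonian K g Rt z₂ ≤
      c * F * (1 + ‖z₁‖ ^ (p - 1) + ‖z₂‖ ^ (p - 1)) * ‖z₁ - z₂‖ := by
    have hψ := hamiltonian_le_add_mul_norm_sub hc.le hRt ⟨u₀, hu₀⟩ (hbdd z₁) fun u hu hle =>
      hloc z₂ u hu <| hle.trans <| by gcongr; exact csInf_le (hbdd z₂) (mem_image_of_mem _ hu₀)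
    rw [hp1]
    calc _ ≤ c * (F * (1 + ‖z₂‖ ^ (q - 1)⁻¹)) * ‖z₁ - z₂‖ := by linarith
      _ ≤ _ := by
        rw [← mul_assoc]; gcongr; linarith [Real.rpow_nonneg (norm_nonneg z₁) (q - 1)⁻¹]
  refine ⟨c * F, by positivity, fun z₁ z₂ => abs_sub_le_iff.2 ⟨hside z₁ z₂, ?_⟩⟩
  rw [norm_sub_rev, add_right_comm 1]
  exact hside z₂ z₁

/-- The Hamiltonian `ψ(z) = inf_{u ∈ K} { g(u) + ⟪z, R̃(u)⟫ }` is locally Lipschitz with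
the quantitative bound `|ψ(z₁) - ψ(z₂)| ≤ C'(1 + ‖z₁‖^{p-1} + ‖z₂‖^{p-1})‖z₁ - z₂‖`. -/
theorem stmt3 {U H : Type*} [NormedAddCommGroup U] [NormedSpace ℝ U] [MeasurableSpace U]
    [BorelSpace U] [NormedAddCommGroup H] [InnerProductSpace ℝ H]
    (K : Set U) (hKclosed : IsClosed K) (hKne : K.Nonempty)
    (g : U → ℝ) (hgmeas : Measurable g)
    (Rt : U → H) (c C R q p : ℝ) (hc : 0 < c) (hC : 0 < C) (hR : 0 < R)
    (hq1 : 1 < q) (hq2 : q ≤ 2) (hp : p = q / (q - 1))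
    (hg0 : ∀ u, 0 ≤ g u) (hgup : ∀ u, g u ≤ c * (1 + ‖u‖ ^ q))
    (hcoer : ∀ u ∈ K, R ≤ ‖u‖ → C * ‖u‖ ^ q ≤ g u)
    (hRt : ∀ u, ‖Rt u‖ ≤ c * (1 + ‖u‖)) :
    ∃ C' > 0, ∀ z₁ z₂ : H,
      |sInf ((fun u => g u + ⟪z₁, Rt u⟫) '' K) -
        sInf ((fun u => g u + ⟪z₂, Rt u⟫) '' K)|
        ≤ C' * (1 + ‖z₁‖ ^ (p - 1) + ‖z₂‖ ^ (p - 1)) * ‖z₁ - z₂‖ :=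
  stmt3_general K hKne g Rt c C R q p hc hC hq1 hp hg0 hcoer hRt
end
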